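/- If N is a normal subgroup of W_n, then for every 1 ≤ k ≤ n the product (N ∩ B_k)(N ∩ B_{k+1})···(N ∩ B_n) is a normal subgroup of W_n. -/

import Mathlib

open Equiv MvPolynomial

namespace Wreath

variable (p n : ℕ)

/-- The set of `pⁿ` points on which `W n` acts. -/
abbrev Pts := Fin n → ZMod p

/-- Truncation of a point: keep coordinates below `k`, zero out the rest. -/
def trunc (k : Fin n) (x : Pts p n) : Pts p n := fun j => if j < k then x j else 0

lemma trunc_update (k : Fin n) (x : Pts p n) (v : ZMod p) :
    trunc p n k (Function.update x k v) = trunc p n k x := by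
  funext j
  by_cases hj : j < k
  · simp [trunc, Function.update_of_ne (ne_of_lt hj), hj]
  · simp [trunc, hj]

/-- The permutation `FΔₖ` of `𝔽_pⁿ` sending `x` to `x - F(x₁,…,x_{k-1}) eₖ`. -/
def delta (k : Fin n) (F : Pts p n → ZMod p) : Equiv.Perm (Pts p n) where
  toFun x := Function.update x k (x k - F (trunc p n k x))
  invFun x := Function.update x k (x k + F (trunc p n k x))
  left_inv x := by
    simp only [trunc_update, Function.update_idem, Function.update_self,
      sub_add_cancel, Function.update_eq_self]
  right_inv x := by
    simp only [trunc_update, Function.update_idem, Function.update_self,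
      add_sub_cancel_right, Function.update_eq_self]

/-- A permutation of `𝔽_pⁿ` is triangular if the displacement of the `k`-th coordinate
only depends on the coordinates below `k`.  The triangular permutations form exactly the
iterated wreath product `W_n = ≀ⁿ 𝔽_p`, a Sylow `p`-subgroup of `Sym(pⁿ)`. -/
def Triangular (π : Equiv.Perm (Pts p n)) : Prop :=
  ∀ (k : Fin n) (x y : Pts p n), (∀ j : Fin n, j < k → x j = y j) →
    π x k - x k = π y k - y k

lemma Triangular.agree {π : Equiv.Perm (Pts p n)} (hπ : Triangular p n π) {k : Fin n}
    {x y : Pts p n} (h : ∀ j : Fin n, j < k → x j = y j) :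
    ∀ j : Fin n, j < k → π x j = π y j := by
  intro j hj
  have h2 := hπ j x y (fun i hi => h i (hi.trans hj))
  rw [h j hj] at h2
  exact sub_left_inj.mp h2

lemma Triangular.mul {π σ : Equiv.Perm (Pts p n)} (hπ : Triangular p n π)
    (hσ : Triangular p n σ) : Triangular p n (π * σ) := by
  intro k x y h
  have h1 := hπ k (σ x) (σ y) (hσ.agree p n h)
  have h2 := hσ k x y h
  simp only [Equiv.Perm.mul_apply]
  linear_combination h1 + h2

lemma Triangular.one : Triangular p n 1 := by
  intro k x y h
  simp [h k]

lemma Triangular.inv {π : Equiv.Perm (Pts p n)} (hπ : Triangular p n π) :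
    Triangular p n π⁻¹ := by
  intro k x y h
  have key : ∀ m : ℕ, ∀ j : Fin n, (j : ℕ) ≤ m → j < k → π⁻¹ x j = π⁻¹ y j := by
    intro m
    induction m with
    | zero =>
      intro j hj hjk
      have hb : ∀ i : Fin n, i < j → π⁻¹ x i = π⁻¹ y i := by
        intro i hi
        have hi' : (i : ℕ) < (j : ℕ) := hi
        omega
      have ht := hπ j (π⁻¹ x) (π⁻¹ y) hb
      simp only [Equiv.Perm.coe_inv, Equiv.apply_symm_apply] at ht
      rw [h j hjk] at ht
      exact (sub_right_inj.mp ht)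
    | succ m ih =>
      intro j hj hjk
      have hb : ∀ i : Fin n, i < j → π⁻¹ x i = π⁻¹ y i := by
        intro i hi
        have hi' : (i : ℕ) < (j : ℕ) := hi
        exact ih i (by omega) (hi.trans hjk)
      have ht := hπ j (π⁻¹ x) (π⁻¹ y) hb
      simp only [Equiv.Perm.coe_inv, Equiv.apply_symm_apply] at ht
      rw [h j hjk] at ht
      exact (sub_right_inj.mp ht)
  have hb : ∀ j : Fin n, j < k → π⁻¹ x j = π⁻¹ y j := fun j hj => key j j le_rfl hj
  have ht := hπ k (π⁻¹ x) (π⁻¹ y) hb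
  simp only [Equiv.Perm.coe_inv, Equiv.apply_symm_apply] at ht
  linear_combination -ht

/-- The subgroup of triangular permutations fixing every coordinate `j` satisfying `P j`. -/
def WB (P : Fin n → Prop) : Subgroup (Equiv.Perm (Pts p n)) where
  carrier := {π | Triangular p n π ∧ ∀ (x : Pts p n) (j : Fin n), P j → π x j = x j}
  one_mem' := ⟨Triangular.one p n, by intro x j _; simp⟩
  mul_mem' := by
    rintro a b ⟨ha, ha'⟩ ⟨hb, hb'⟩
    refine ⟨ha.mul p n hb, ?_⟩
    intro x j hj
    simp only [Equiv.Perm.mul_apply]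
    rw [ha' (b x) j hj, hb' x j hj]
  inv_mem' := by
    rintro a ⟨ha, ha'⟩
    refine ⟨ha.inv p n, ?_⟩
    intro x j hj
    have h := ha' (a⁻¹ x) j hj
    rw [Equiv.Perm.coe_inv, Equiv.apply_symm_apply] at h
    exact h.symm

/-- `W p n = ≀ⁿ 𝔽_p` : the iterated wreath product, realized as the group of all
triangular permutations of `𝔽_pⁿ`. -/
def W : Subgroup (Equiv.Perm (Pts p n)) := WB p n (fun _ => False)

/-- The `k`-th base subgroup `B_k` (elements `fΔₖ`, only the `k`-th coordinate moves). -/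
def B (k : Fin n) : Subgroup (Equiv.Perm (Pts p n)) := WB p n (fun j => j ≠ k)

/-- The "tail" subgroup `B_{m+1} ⋯ B_n` (0-indexed: coordinates `< m` are fixed). -/
def Btail (m : ℕ) : Subgroup (Equiv.Perm (Pts p n)) := WB p n (fun j => (j : ℕ) < m)

/-- `γ_i(W_n)` (paper indexing: `γ₁ = W_n`), as a subgroup of `Perm (𝔽_pⁿ)`. -/
def gammaP (i : ℕ) : Subgroup (Equiv.Perm (Pts p n)) :=
  Subgroup.map (W p n).subtype (Subgroup.lowerCentralSeries (⊤ : Subgroup ↥(W p n)) (i - 1))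

/-- `Z_i(W_n)` (with `Z₀ = 1`), as a subgroup of `Perm (𝔽_pⁿ)`. -/
def ZP (i : ℕ) : Subgroup (Equiv.Perm (Pts p n)) :=
  Subgroup.map (W p n).subtype (upperCentralSeries ↥(W p n) i)

/-- The element `fΔₖ` of the base subgroup `B_k` attached to a polynomial `f`. -/
noncomputable def elt (f : MvPolynomial (Fin n) (ZMod p)) (k : Fin n) : Equiv.Perm (Pts p n) :=
  delta p n k (fun t => eval t f)

/-- The monomial element `x^Λ Δₖ`. -/
noncomputable def monoElem (Λ : Fin n →₀ ℕ) (k : Fin n) : Equiv.Perm (Pts p n) :=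
  elt p n (monomial Λ (1 : ZMod p)) k

/-- `pdeg(x^Λ) = Σ λⱼ pʲ` (coordinates 0-indexed). -/
def pdegM (Λ : Fin n →₀ ℕ) : ℕ := ∑ j : Fin n, Λ j * p ^ (j : ℕ)

/-- `μₖ = p^{n-1} - p^k` (0-indexed `k`). -/
def mu (k : Fin n) : ℕ := p ^ (n - 1) - p ^ (k : ℕ)

/-- `pdeg(x^Λ Δₖ) = pdeg(x^Λ) + μₖ`. -/
def pdegMk (Λ : Fin n →₀ ℕ) (k : Fin n) : ℕ := pdegM p n Λ + mu p n k

/-- `pdeg(fΔₖ)`: maximum of the `pdeg` of the monomials of `f`, plus `μₖ`. -/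
def pdegP (f : MvPolynomial (Fin n) (ZMod p)) (k : Fin n) : ℕ :=
  f.support.sup (pdegM p n) + mu p n k

/-- `f` is a reduced polynomial: every variable appears with degree at most `p - 1`. -/
def Reduced (f : MvPolynomial (Fin n) (ZMod p)) : Prop :=
  ∀ Λ ∈ f.support, ∀ j : Fin n, Λ j ≤ p - 1

/-- `f` only involves the variables `xⱼ` with `j < k`. -/
def VarsLt (k : Fin n) (f : MvPolynomial (Fin n) (ZMod p)) : Prop :=
  ∀ Λ ∈ f.support, ∀ j : Fin n, Λ j ≠ 0 → j < k

/-- The normal closure of an element inside the group `W_n`: the smallest subgroup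
containing `g` which is stable under conjugation by every element of `W_n`. -/
def normalClosureIn (g : Equiv.Perm (Pts p n)) : Subgroup (Equiv.Perm (Pts p n)) :=
  sInf {S | g ∈ S ∧ ∀ w ∈ W p n, ∀ s ∈ S, w * s * w⁻¹ ∈ S}

/-- The canonical elementary abelian regular subgroup `T = ⟨Δ₁, …, Δₙ⟩`. -/
def T : Subgroup (Equiv.Perm (Pts p n)) :=
  Subgroup.closure (Set.range fun i : Fin n => delta p n i (fun _ => 1))

end Wreath

/-!
The subgroup generated by the `N ∩ B_j` with `j ≥ k` is normalized by every `B_i`, hence by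
`W_n = ⟨B_1, …, B_n⟩`. Conjugation by `B_i` preserves `N ∩ B_j` when `i < j` (as `B_j` is
normalized by `B_i`) and fixes it when `i = j` (as `B_j` is abelian); when `i > j` it multiplies
`h ∈ N ∩ B_j` by the commutator `[h, w] ∈ N ∩ B_i`, which is again a generator. Peeling off the
factor `N ∩ B_k`, which normalizes the subgroup generated by the later factors, shows by
descending induction on `k` that this subgroup is exactly the set of products
`(N ∩ B_n) ⋯ (N ∩ B_k)`.
-/

open Equiv Subgroup
open scoped Pointwise

namespace Subgroup

variable {G : Type*} [Group G]

lemma le_normalizer_closure_of_conj_mem {U : Set G} {K : Subgroup G}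
    (h : ∀ k ∈ K, ∀ u ∈ U, k * u * k⁻¹ ∈ closure U) : K ≤ normalizer (closure U : Set G) := by
  have conj_mem : ∀ k ∈ K, ∀ x ∈ closure U, k * x * k⁻¹ ∈ closure U := by
    intro k hk x hx
    induction hx using closure_induction with
    | mem u hu => exact h k hk u hu
    | one => simp
    | mul x y _ _ hx hy => simpa [mul_assoc] using mul_mem hx hy
    | inv x _ hx => simpa [mul_assoc] using inv_mem hx
  intro k hk x
  exact ⟨conj_mem k hk x, fun hx => by simpa [mul_assoc] using conj_mem k⁻¹ (inv_mem hk) _ hx⟩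

end Subgroup

section TailProducts

variable {G : Type*} [Group G] {n : ℕ}

lemma prod_reverse_ofFn_eq_update_mul (c : Fin n → G) (m : Fin n)
    (h : ∀ j < m, c j = 1) :
    (List.ofFn c).reverse.prod = (List.ofFn (Function.update c m 1)).reverse.prod * c m := by
  induction n with
  | zero => exact m.elim0
  | succ n ih =>
    induction m using Fin.cases with
    | zero => simp [List.ofFn_succ]
    | succ m =>
      have hc0 : c 0 = 1 := h 0 (Fin.succ_pos m)
      have htail : (fun i : Fin n => Function.update c m.succ 1 i.succ)
          = Function.update (fun i => c i.succ) m 1 :=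
        Function.update_comp_eq_of_injective _ (Fin.succ_injective n) m 1
      simp only [List.ofFn_succ, List.reverse_cons, List.prod_append, List.prod_cons,
        List.prod_nil, mul_one, hc0, Function.update_of_ne (Fin.succ_ne_zero m).symm, htail,
        ih (fun i => c i.succ) m (fun j hj => h j.succ (Fin.succ_lt_succ_iff.2 hj))]

def tailProducts (H : Fin n → Subgroup G) (m : ℕ) : Set G :=
  {g | ∃ c : Fin n → G, (∀ j : Fin n, m ≤ (j : ℕ) → c j ∈ H j) ∧
    (∀ j : Fin n, ¬ m ≤ (j : ℕ) → c j = 1) ∧ g = (List.ofFn c).reverse.prod}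

variable (H : Fin n → Subgroup G)

lemma tailProducts_of_le {m : ℕ} (hm : n ≤ m) : tailProducts H m = {1} := by
  ext g
  constructor
  · rintro ⟨c, -, hc, rfl⟩
    have : c = fun _ => 1 := funext fun j => hc j (by omega)
    simp [this]
  · rintro rfl
    exact ⟨fun _ => 1, fun j hj => by omega, fun _ _ => rfl, by simp⟩

lemma tailProducts_eq_mul (m : Fin n) :
    tailProducts H m = tailProducts H (m + 1) * (H m : Set G) := by
  ext g
  constructor
  · rintro ⟨c, hcH, hc1, rfl⟩
    refine Set.mem_mul.2 ⟨_, ⟨Function.update c m 1, fun j hj => ?_, fun j hj => ?_, rfl⟩,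
      c m, hcH m le_rfl, (prod_reverse_ofFn_eq_update_mul c m fun j hj => hc1 j (not_le.2 hj)).symm⟩
    · rw [Function.update_of_ne (by rintro rfl; omega)]
      exact hcH j (by omega)
    · rcases eq_or_ne j m with rfl | hjm
      · simp
      · rw [Function.update_of_ne hjm]
        exact hc1 j (by rw [← Fin.val_ne_iff] at hjm; omega)
  · intro hg
    obtain ⟨_, ⟨c, hcH, hc1, rfl⟩, h, hh, rfl⟩ := Set.mem_mul.1 hg
    have hcm : c m = 1 := hc1 m (by omega)
    refine ⟨Function.update c m h, fun j hj => ?_, fun j hj => ?_, ?_⟩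
    · rcases eq_or_ne j m with rfl | hjm
      · simpa using hh
      · rw [Function.update_of_ne hjm]
        exact hcH j (by rw [← Fin.val_ne_iff] at hjm; omega)
    · rw [Function.update_of_ne (by rintro rfl; exact hj le_rfl)]
      exact hc1 j (by omega)
    · rw [prod_reverse_ofFn_eq_update_mul (Function.update c m h) m fun j hj => ?_,
        Function.update_idem, Function.update_self, Function.update_eq_self_iff.2 hcm.symm]
      rw [Function.update_of_ne hj.ne]
      exact hc1 j (by rw [Fin.lt_def] at hj; omega)

end TailProducts

namespace Wreath

variable {p n : ℕ}

lemma B_le_W (j : Fin n) : B p n j ≤ W p n :=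
  fun _ h => ⟨h.1, fun _ _ hf => hf.elim⟩

lemma W_le_Btail_zero : W p n ≤ Btail p n 0 :=
  fun _ h => ⟨h.1, fun _ _ hj => absurd hj (Nat.not_lt_zero _)⟩

lemma eq_one_of_mem_Btail {m : ℕ} (hm : n ≤ m) {u : Perm (Pts p n)} (hu : u ∈ Btail p n m) :
    u = 1 :=
  Equiv.ext fun x => funext fun j => hu.2 x j (by omega)

lemma commute_of_mem_B {j : Fin n} {a b : Perm (Pts p n)} (ha : a ∈ B p n j)
    (hb : b ∈ B p n j) : a * b = b * a := by
  refine Equiv.ext fun x => funext fun l => ?_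
  simp only [Perm.mul_apply]
  by_cases hl : l = j
  · subst hl
    have h1 := ha.1 l (b x) x (fun i hi => hb.2 x i hi.ne)
    have h2 := hb.1 l (a x) x (fun i hi => ha.2 x i hi.ne)
    linear_combination h1 - h2
  · rw [ha.2 (b x) l hl, hb.2 x l hl, hb.2 (a x) l hl, ha.2 x l hl]

lemma conj_mem_B_of_lt {i j : Fin n} (hij : i < j) {a b : Perm (Pts p n)}
    (ha : a ∈ B p n i) (hb : b ∈ B p n j) : a * b * a⁻¹ ∈ B p n j := by
  have ha' : a⁻¹ ∈ B p n i := inv_mem ha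
  refine ⟨(ha.1.mul p n hb.1).mul p n ha'.1, fun x l hl => ?_⟩
  simp only [Perm.mul_apply]
  by_cases hli : l = i
  · subst hli
    have h1 := ha.1 l (b (a⁻¹ x)) (a⁻¹ x) fun i hi => hb.2 _ i (hi.trans hij).ne
    have h2 : b (a⁻¹ x) l = a⁻¹ x l := hb.2 _ l hl
    have h3 : a (a⁻¹ x) l = x l := by simp
    linear_combination h1 + h2 + h3
  · rw [ha.2 _ l hli, hb.2 _ l hl, ha'.2 _ l hli]

lemma delta_mem_B (k : Fin n) (F : Pts p n → ZMod p) : delta p n k F ∈ B p n k := by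
  refine ⟨fun l x y h => ?_, fun x l hl => by simp [delta, Function.update_of_ne hl]⟩
  by_cases hl : l = k
  · subst hl
    have htrunc : trunc p n l x = trunc p n l y := funext fun j => by
      by_cases hj : j < l <;> simp [trunc, hj, h]
    simp [delta, htrunc]
  · simp [delta, Function.update_of_ne hl]

/-- The factor `delta m (-u · m)` undoes the displacement of the `m`-th coordinate that `u`
makes at the points `trunc x`, which by triangularity is its displacement at every point. -/
lemma mul_delta_inv_mem_Btail (m : Fin n) {u : Perm (Pts p n)} (hu : u ∈ Btail p n m) :
    u * (delta p n m fun t => -u t m)⁻¹ ∈ Btail p n (m + 1) := by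
  set c := delta p n m fun t => -u t m
  have hc : c⁻¹ ∈ B p n m := inv_mem (delta_mem_B m _)
  refine ⟨hu.1.mul p n hc.1, fun x j hj => ?_⟩
  simp only [Perm.mul_apply]
  rcases eq_or_ne j m with rfl | hjm
  · have hcx : c⁻¹ x j = x j + -u (trunc p n j x) j := by
      simp [c, delta, Perm.inv_def, Equiv.symm]
    have hu_cx := hu.1 j (c⁻¹ x) x fun i hi => hc.2 x i hi.ne
    have hu_trunc := hu.1 j (trunc p n j x) x fun i hi => by simp [trunc, hi]
    have htrunc : trunc p n j x j = 0 := by simp [trunc]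
    linear_combination hu_cx + hcx - hu_trunc - htrunc
  · rw [hu.2 _ j (by rw [← Fin.val_ne_iff] at hjm; omega), hc.2 x j hjm]

lemma Btail_le_closure_B {m : ℕ} (hm : m ≤ n) :
    Btail p n m ≤ closure (⋃ i, (B p n i : Set (Perm (Pts p n)))) := by
  induction hm using Nat.decreasingInduction with
  | self => exact fun u hu => (eq_one_of_mem_Btail le_rfl hu) ▸ one_mem _
  | of_succ m hm ih =>
    intro u hu
    have hc := delta_mem_B (p := p) ⟨m, hm⟩ fun t => -u t ⟨m, hm⟩
    simpa using mul_mem (ih (mul_delta_inv_mem_Btail ⟨m, hm⟩ hu))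
      (subset_closure (Set.mem_iUnion_of_mem _ hc))

lemma W_le_closure_B : W p n ≤ closure (⋃ i, (B p n i : Set (Perm (Pts p n)))) :=
  W_le_Btail_zero.trans (Btail_le_closure_B (Nat.zero_le n))

variable (N : Subgroup (Perm (Pts p n)))

def tailSubgroup (m : ℕ) : Subgroup (Perm (Pts p n)) :=
  closure (⋃ (j : Fin n) (_ : m ≤ (j : ℕ)), ((N ⊓ B p n j : Subgroup _) : Set (Perm (Pts p n))))

variable {N}

lemma inf_B_le_tailSubgroup {m : ℕ} {j : Fin n} (hj : m ≤ j) :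
    N ⊓ B p n j ≤ tailSubgroup N m :=
  fun _ h => subset_closure (Set.mem_biUnion hj h)

lemma tailSubgroup_eq_sup (m : Fin n) :
    tailSubgroup N m = tailSubgroup N (m + 1) ⊔ (N ⊓ B p n m) := by
  refine le_antisymm (closure_le _ |>.2 (Set.iUnion₂_subset fun j hj => ?_))
    (sup_le (closure_le _ |>.2 (Set.iUnion₂_subset fun j hj => ?_))
      (inf_B_le_tailSubgroup le_rfl))
  · rcases eq_or_ne j m with rfl | hjm
    · exact fun _ hx => mem_sup_right hx
    · exact fun _ hx => mem_sup_left
        (inf_B_le_tailSubgroup (by rw [← Fin.val_ne_iff] at hjm; omega) hx)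
  · exact fun _ hx => inf_B_le_tailSubgroup (by omega) hx

variable (hN : ∀ w ∈ W p n, ∀ g ∈ N, w * g * w⁻¹ ∈ N)
include hN

lemma conj_mem_tailSubgroup {m : ℕ} {i j : Fin n} (hj : m ≤ j) {w h : Perm (Pts p n)}
    (hw : w ∈ B p n i) (hh : h ∈ N ⊓ B p n j) : w * h * w⁻¹ ∈ tailSubgroup N m := by
  obtain ⟨hhN, hhB⟩ := mem_inf.1 hh
  have hwN : w * h * w⁻¹ ∈ N := hN w (B_le_W i hw) h hhN
  rcases lt_trichotomy i j with hij | rfl | hji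
  · exact inf_B_le_tailSubgroup hj (mem_inf.2 ⟨hwN, conj_mem_B_of_lt hij hw hhB⟩)
  · rw [commute_of_mem_B hw hhB, mul_inv_cancel_right]
    exact inf_B_le_tailSubgroup hj hh
  · have hcomm : h⁻¹ * (w * h * w⁻¹) ∈ N ⊓ B p n i := by
      refine mem_inf.2 ⟨mul_mem (inv_mem hhN) hwN, ?_⟩
      have := mul_mem (conj_mem_B_of_lt hji (inv_mem hhB) hw) (inv_mem hw)
      simpa only [inv_inv, mul_assoc] using this
    simpa using mul_mem (inf_B_le_tailSubgroup hj hh)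
      (inf_B_le_tailSubgroup (hj.trans hji.le) hcomm)

lemma W_le_normalizer_tailSubgroup (m : ℕ) :
    W p n ≤ normalizer (tailSubgroup N m : Set (Perm (Pts p n))) := by
  refine W_le_closure_B.trans (closure_le _ |>.2 (Set.iUnion_subset fun i => ?_))
  refine le_normalizer_closure_of_conj_mem fun w hw u hu => ?_
  simp only [Set.mem_iUnion] at hu
  obtain ⟨j, hj, hu⟩ := hu
  exact conj_mem_tailSubgroup hN hj hw hu

lemma coe_tailSubgroup {m : ℕ} (hm : m ≤ n) :
    (tailSubgroup N m : Set (Perm (Pts p n))) = tailProducts (fun j => N ⊓ B p n j) m := by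
  induction hm using Nat.decreasingInduction with
  | self =>
    rw [tailProducts_of_le _ le_rfl, tailSubgroup, closure_eq_bot_iff.2, coe_bot]
    simp
  | of_succ m hm ih =>
    have hnorm :
        N ⊓ B p n ⟨m, hm⟩ ≤ normalizer (tailSubgroup N (m + 1) : Set (Perm (Pts p n))) :=
      inf_le_right.trans ((B_le_W _).trans (W_le_normalizer_tailSubgroup hN _))
    rw [tailSubgroup_eq_sup ⟨m, hm⟩, coe_mul_of_right_le_normalizer_left _ _ hnorm, ih,
      tailProducts_eq_mul _ ⟨m, hm⟩]

end Wreath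

theorem tail_product_normal_general (p n : ℕ)
    (N : Subgroup (Equiv.Perm (Wreath.Pts p n)))
    (hNnorm : ∀ w ∈ Wreath.W p n, ∀ g ∈ N, w * g * w⁻¹ ∈ N) (k : Fin n) :
    ∃ S : Subgroup (Equiv.Perm (Wreath.Pts p n)),
      (S : Set (Equiv.Perm (Wreath.Pts p n))) =
        {g | ∃ c : Fin n → Equiv.Perm (Wreath.Pts p n),
          (∀ j, k ≤ j → c j ∈ N ⊓ Wreath.B p n j) ∧ (∀ j, ¬ k ≤ j → c j = 1) ∧
          g = (List.ofFn c).reverse.prod} ∧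
      ∀ w ∈ Wreath.W p n, ∀ s ∈ S, w * s * w⁻¹ ∈ S :=
  ⟨Wreath.tailSubgroup N k, Wreath.coe_tailSubgroup hNnorm k.isLt.le, fun _ hw s hs =>
    (mem_normalizer_iff.1 (Wreath.W_le_normalizer_tailSubgroup hNnorm k hw) s).1 hs⟩

/-- if `N ⊴ W_n`, then `(N ∩ B_k)(N ∩ B_{k+1})⋯(N ∩ B_n)` is a normal
subgroup of `W_n`. -/
theorem tail_product_normal (p n : ℕ) (hp : p.Prime) (hodd : p ≠ 2)
    (N : Subgroup (Equiv.Perm (Wreath.Pts p n))) (hNW : N ≤ Wreath.W p n)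
    (hNnorm : ∀ w ∈ Wreath.W p n, ∀ g ∈ N, w * g * w⁻¹ ∈ N) (k : Fin n) :
    ∃ S : Subgroup (Equiv.Perm (Wreath.Pts p n)),
      (S : Set (Equiv.Perm (Wreath.Pts p n))) =
        {g | ∃ c : Fin n → Equiv.Perm (Wreath.Pts p n),
          (∀ j, k ≤ j → c j ∈ N ⊓ Wreath.B p n j) ∧ (∀ j, ¬ k ≤ j → c j = 1) ∧
          g = (List.ofFn c).reverse.prod} ∧
      ∀ w ∈ Wreath.W p n, ∀ s ∈ S, w * s * w⁻¹ ∈ S :=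
  tail_product_normal_general p n N hNnorm k
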